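/- Let n ≥ 1 and let M, N be nonzero n × n complex positive semidefinite matrices. Then M ∘ N ≥ (1 / min(rank(M), rank(N))) · d d* in the Loewner order, where d is the vector of diagonal entries of √M · √(conj(N)), √· denotes the (unique) positive semidefinite square root, and conj(N) is the entrywise complex conjugate of N (which is positive semidefinite). -/

import Mathlib

open Matrix ComplexOrder

/-- The positive semidefinite square root of a positive semidefinite matrix
(the definition `Matrix.PosSemidef.sqrt` of the older Mathlib, since removed). -/
noncomputable def Matrix.PosSemidef.sqrt {n 𝕜 : Type*} [Fintype n] [DecidableEq n] [RCLike 𝕜]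
    {A : Matrix n n 𝕜} (hA : A.PosSemidef) : Matrix n n 𝕜 :=
  hA.1.eigenvectorUnitary.1 * diagonal ((↑) ∘ (√·) ∘ hA.1.eigenvalues) *
  (star hA.1.eigenvectorUnitary : Matrix n n 𝕜)

/-!
With `A = √M` and `Y = (√N̄)ᵀ` one has `M = A Aᴴ`, `N = Y Yᴴ` and `d = diag (A Yᵀ)`. For a vector
`x`, the matrix `W = Yᵀ diag(x̄) A` satisfies `x* (M ∘ N) x = ‖W‖²` (Frobenius norm),
`x* d d* x = |tr W|²` and `rank W ≤ min (rank M) (rank N)`. It remains to see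
`|tr W|² ≤ rank W · ‖W‖²`: this is Cauchy–Schwarz for `tr W = ⟨P, W⟩`, where `P` is the orthogonal
projection onto the range of `W`, so that `‖P‖² = tr P = rank W`.
-/

namespace Matrix

variable {m n 𝕜 : Type*} [Fintype m] [Fintype n] [RCLike 𝕜]

lemma trace_mul_conjTranspose_self_eq_sum_norm_sq (A : Matrix n m 𝕜) :
    (A * Aᴴ).trace = ((∑ i, ∑ j, ‖A i j‖ ^ 2 : ℝ) : 𝕜) := by
  simp [trace, mul_apply, RCLike.mul_conj]

lemma norm_trace_mul_sq_le (A : Matrix n m 𝕜) (B : Matrix m n 𝕜) :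
    ‖(A * B).trace‖ ^ 2 ≤ (∑ i, ∑ j, ‖A i j‖ ^ 2) * ∑ i, ∑ j, ‖B i j‖ ^ 2 := by
  have h := Finset.sum_mul_sq_le_sq_mul_sq Finset.univ (fun ij : n × m => ‖A ij.1 ij.2‖)
    (fun ij => ‖B ij.2 ij.1‖)
  simp only [← Finset.univ_product_univ, Finset.sum_product] at h
  rw [Finset.sum_comm (f := fun i j => ‖B j i‖ ^ 2)] at h
  refine le_trans (pow_le_pow_left₀ (norm_nonneg _) ?_ 2) h
  calc ‖(A * B).trace‖ = ‖∑ i, ∑ j, A i j * B j i‖ := by simp [trace, mul_apply]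
    _ ≤ ∑ i, ∑ j, ‖A i j‖ * ‖B j i‖ := by
      refine (norm_sum_le _ _).trans (Finset.sum_le_sum fun i _ => ?_)
      exact (norm_sum_le _ _).trans_eq (by simp only [norm_mul])

lemma star_dotProduct_vecMulVec_mulVec (d x : n → 𝕜) :
    star x ⬝ᵥ (vecMulVec d (star d) *ᵥ x) = ((‖star x ⬝ᵥ d‖ ^ 2 : ℝ) : 𝕜) := by
  rw [vecMulVec_mulVec, star_dotProduct (v := d)]
  simp [dotProduct_smul, RCLike.conj_mul]

section

variable [DecidableEq n] {A : Matrix n n 𝕜}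

lemma PosSemidef.sqrt_eq_cfc (hA : A.PosSemidef) : hA.sqrt = cfc Real.sqrt A :=
  (hA.1.cfc_eq _).symm

lemma PosSemidef.isHermitian_sqrt (hA : A.PosSemidef) : hA.sqrt.IsHermitian :=
  hA.sqrt_eq_cfc ▸ cfc_predicate _ A

lemma PosSemidef.sqrt_mul_sqrt (hA : A.PosSemidef) : hA.sqrt * hA.sqrt = A := by
  have hspec : ∀ x ∈ spectrum ℝ A, 0 ≤ x := by
    rw [hA.1.spectrum_real_eq_range_eigenvalues]
    rintro - ⟨i, rfl⟩
    exact hA.eigenvalues_nonneg i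
  rw [hA.sqrt_eq_cfc, ← cfc_mul Real.sqrt Real.sqrt A]
  calc cfc (fun x => √x * √x) A = cfc id A :=
        cfc_congr fun x hx => Real.mul_self_sqrt (hspec x hx)
    _ = A := cfc_id ℝ A hA.1

lemma IsHermitian.trace_cfc (hA : A.IsHermitian) (f : ℝ → ℝ) :
    (cfc f A).trace = ∑ i, (f (hA.eigenvalues i) : 𝕜) := by
  rw [hA.cfc_eq, IsHermitian.cfc, Unitary.conjStarAlgAut_apply, trace_mul_cycle,
    Unitary.coe_star_mul_self, one_mul, trace_diagonal]
  rfl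

lemma IsHermitian.exists_isStarProjection_mul_eq_self (hA : A.IsHermitian) :
    ∃ P : Matrix n n 𝕜, IsStarProjection P ∧ P * A = A ∧ P.trace = A.rank := by
  set f : ℝ → ℝ := fun x => if x = 0 then 0 else 1
  have hf : ContinuousOn f (spectrum ℝ A) := A.finite_real_spectrum.continuousOn f
  have hA' : IsSelfAdjoint A := hA
  refine ⟨cfc f A, ⟨?_, cfc_predicate f A⟩, ?_, ?_⟩
  · rw [IsIdempotentElem, ← cfc_mul f f A]
    congr 1
    ext x
    by_cases hx : x = 0 <;> simp [f, hx]
  · calc cfc f A * A = cfc f A * cfc id A := by rw [cfc_id ℝ A hA']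
      _ = cfc id A := by
        rw [← cfc_mul f id A]
        congr 1
        ext x
        by_cases hx : x = 0 <;> simp [f, hx]
      _ = A := cfc_id ℝ A hA'
  · rw [hA.trace_cfc, hA.rank_eq_card_non_zero_eigs, Fintype.card_subtype, ← Finset.sum_boole]
    simp [f, ite_not]

lemma exists_isStarProjection_mul_eq_self (V : Matrix n m 𝕜) :
    ∃ P : Matrix n n 𝕜, IsStarProjection P ∧ P * V = V ∧ P.trace = V.rank := by
  obtain ⟨P, hP, hPH, htr⟩ :=
    (posSemidef_self_mul_conjTranspose V).isHermitian.exists_isStarProjection_mul_eq_self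
  refine ⟨P, hP, ?_, by rw [htr, rank_self_mul_conjTranspose]⟩
  have h : (1 - P) * (V * Vᴴ) = 0 := by rw [sub_mul, one_mul, hPH, sub_self]
  rw [mul_self_mul_conjTranspose_eq_zero, Matrix.sub_mul, Matrix.one_mul, sub_eq_zero] at h
  exact h.symm

lemma norm_trace_sq_le_rank_mul_sum_norm_sq (V : Matrix n n 𝕜) :
    ‖V.trace‖ ^ 2 ≤ V.rank * ∑ i, ∑ j, ‖V i j‖ ^ 2 := by
  obtain ⟨P, hP, hPV, htr⟩ := exists_isStarProjection_mul_eq_self V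
  have hP_norm : ∑ i, ∑ j, ‖P i j‖ ^ 2 = (V.rank : ℝ) := by
    have h := trace_mul_conjTranspose_self_eq_sum_norm_sq P
    rw [show Pᴴ = P from hP.isSelfAdjoint, hP.isIdempotentElem.eq, htr] at h
    exact_mod_cast h.symm
  simpa only [hPV, hP_norm] using norm_trace_mul_sq_le P V

lemma star_dotProduct_hadamard_mulVec (X Y : Matrix n m 𝕜) (x : n → 𝕜) :
    star x ⬝ᵥ ((X * Xᴴ) ⊙ (Y * Yᴴ) *ᵥ x) =
      (Yᵀ * diagonal (star x) * X * (Yᵀ * diagonal (star x) * X)ᴴ).trace := by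
  rw [dotProduct_mulVec, dotProduct_vecMul_hadamard]
  simp only [transpose_mul, conjTranspose_mul, diagonal_conjTranspose, star_star,
    diagonal_transpose, ← conjTranspose_transpose_eq_transpose_conjTranspose]
  rw [Matrix.mul_assoc Yᵀ, Matrix.mul_assoc Yᵀ, trace_mul_comm Yᵀ]
  simp only [Matrix.mul_assoc]

lemma trace_transpose_mul_diagonal_mul (X Y : Matrix n m 𝕜) (x : n → 𝕜) :
    (Yᵀ * diagonal x * X).trace = x ⬝ᵥ (X * Yᵀ).diag := by
  rw [Matrix.mul_assoc, trace_mul_comm, Matrix.mul_assoc]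
  simp [trace, diagonal_mul, dotProduct]

variable [DecidableEq m]

theorem posSemidef_hadamard_sub_inv_min_rank_smul_vecMulVec (X Y : Matrix n m 𝕜) :
    ((X * Xᴴ) ⊙ (Y * Yᴴ) - ((min X.rank Y.rank : ℕ) : 𝕜)⁻¹ •
      vecMulVec (X * Yᵀ).diag (star (X * Yᵀ).diag)).PosSemidef := by
  set c := min X.rank Y.rank
  set d := (X * Yᵀ).diag
  have hHerm : ((X * Xᴴ) ⊙ (Y * Yᴴ) - (c : 𝕜)⁻¹ • vecMulVec d (star d)).IsHermitian :=
    ((posSemidef_self_mul_conjTranspose X).hadamard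
      (posSemidef_self_mul_conjTranspose Y)).isHermitian.sub
      ((posSemidef_vecMulVec_self_star d).isHermitian.smul (IsSelfAdjoint.natCast c).inv₀)
  refine .of_dotProduct_mulVec_nonneg hHerm fun x => ?_
  set W := Yᵀ * diagonal (star x) * X
  have hrank : W.rank ≤ c :=
    le_min (rank_mul_le_right _ _)
      ((rank_mul_le_left _ _).trans ((rank_mul_le_left _ _).trans (rank_transpose Y).le))
  have hbound : ‖W.trace‖ ^ 2 ≤ c * ∑ i, ∑ j, ‖W i j‖ ^ 2 :=
    (norm_trace_sq_le_rank_mul_sum_norm_sq W).trans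
      (mul_le_mul_of_nonneg_right (by exact_mod_cast hrank) (by positivity))
  rw [sub_mulVec, dotProduct_sub, smul_mulVec, dotProduct_smul, star_dotProduct_hadamard_mulVec,
    star_dotProduct_vecMulVec_mulVec, ← trace_transpose_mul_diagonal_mul,
    trace_mul_conjTranspose_self_eq_sum_norm_sq, smul_eq_mul, ← RCLike.ofReal_natCast,
    ← RCLike.ofReal_inv, ← RCLike.ofReal_mul, ← RCLike.ofReal_sub, RCLike.ofReal_nonneg, sub_nonneg]
  exact inv_mul_le_of_le_mul₀ c.cast_nonneg (by positivity) hbound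

end

end Matrix

theorem schur_product_lower_bound_sqrt_diag_general
    (n : ℕ) (M N : Matrix (Fin n) (Fin n) ℂ)
    (hM : M.PosSemidef) (hN : N.PosSemidef)
    (hNc : (N.map (starRingEnd ℂ)).PosSemidef) :
    (M.hadamard N - ((min M.rank N.rank : ℕ) : ℂ)⁻¹ •
      vecMulVec (hM.sqrt * hNc.sqrt).diag
        (star (hM.sqrt * hNc.sqrt).diag)).PosSemidef := by
  have hM_eq : hM.sqrt * hM.sqrtᴴ = M := by rw [hM.isHermitian_sqrt.eq, hM.sqrt_mul_sqrt]
  have hN_eq : hNc.sqrtᵀ * hNc.sqrtᵀᴴ = N := by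
    rw [conjTranspose_transpose_eq_transpose_conjTranspose, hNc.isHermitian_sqrt.eq,
      ← transpose_mul, hNc.sqrt_mul_sqrt]
    exact hN.isHermitian
  have h := posSemidef_hadamard_sub_inv_min_rank_smul_vecMulVec hM.sqrt hNc.sqrtᵀ
  rwa [← rank_self_mul_conjTranspose hM.sqrt, ← rank_self_mul_conjTranspose hNc.sqrtᵀ,
    transpose_transpose, hM_eq, hN_eq] at h

theorem schur_product_lower_bound_sqrt_diag
    (n : ℕ) (hn : 1 ≤ n) (M N : Matrix (Fin n) (Fin n) ℂ)
    (hM : M.PosSemidef) (hN : N.PosSemidef) (hM0 : M ≠ 0) (hN0 : N ≠ 0)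
    (hNc : (N.map (starRingEnd ℂ)).PosSemidef) :
    (M.hadamard N - ((min M.rank N.rank : ℕ) : ℂ)⁻¹ •
      vecMulVec (hM.sqrt * hNc.sqrt).diag
        (star (hM.sqrt * hNc.sqrt).diag)).PosSemidef :=
  schur_product_lower_bound_sqrt_diag_general n M N hM hN hNc
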